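/- arXiv:1907.04738 — 5 statements merged into one kernel-verified Lean document; each statement's English description precedes it below -/
import Mathlib

section
/- Let A be a unital C*-algebra and let e be a partial isometry in A (e e* e = e) satisfying ‖1 + e‖ ≤ √2 and ‖1 - e‖ ≤ √2. Then e is skew-adjoint: e* = -e. -/
open CFC in
lemma aux_mul_eq_zero {A : Type*} [CStarAlgebra A] [PartialOrder A] [StarOrderedRing A] {a x : A} (ha : 0 ≤ a)
    (h : star x * a * x = 0) : a * x = 0 := by
  have hs : sqrt a * sqrt a = a := sqrt_mul_sqrt_self a ha
  have hsa : IsSelfAdjoint (sqrt a) := (sqrt_nonneg (a := a)).isSelfAdjoint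
  have h0 : star (sqrt a * x) * (sqrt a * x) = 0 := by
    rw [star_mul, hsa.star_eq, mul_assoc, ← mul_assoc (sqrt a) (sqrt a) x, hs,
      ← mul_assoc]
    exact h
  have hz : sqrt a * x = 0 := (CStarRing.star_mul_self_eq_zero_iff _).mp h0
  rw [← hs, mul_assoc, hz, mul_zero]

lemma aux_le_two {A : Type*} [CStarAlgebra A] [PartialOrder A] [StarOrderedRing A] {u : A} (hu : ‖u‖ ≤ Real.sqrt 2) :
    star u * u ≤ 2 := by
  have h1 : star u * u ≤ algebraMap ℝ A ‖star u * u‖ :=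
    IsSelfAdjoint.le_algebraMap_norm_self (IsSelfAdjoint.star_mul_self u)
  have h2 : ‖star u * u‖ ≤ 2 := by
    rw [CStarRing.norm_star_mul_self]
    calc ‖u‖ * ‖u‖ ≤ Real.sqrt 2 * Real.sqrt 2 :=
          mul_le_mul hu hu (norm_nonneg u) (Real.sqrt_nonneg 2)
      _ = 2 := Real.mul_self_sqrt (by norm_num)
  refine h1.trans ?_
  have h3 : algebraMap ℝ A (2 : ℝ) = (2 : A) := by rw [map_ofNat]
  rw [← h3, ← sub_nonneg, ← map_sub]
  have hd : (0 : ℝ) ≤ 2 - ‖star u * u‖ := by linarith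
  have h4 := star_mul_self_nonneg (algebraMap ℝ A (Real.sqrt (2 - ‖star u * u‖)))
  rwa [(IsSelfAdjoint.algebraMap A (IsSelfAdjoint.all _)).star_eq, ← map_mul,
    Real.mul_self_sqrt hd] at h4

theorem stmt_5 {A : Type*} [CStarAlgebra A]
    (e : A) (he : e * star e * e = e)
    (h1 : ‖1 + e‖ ≤ Real.sqrt 2) (h2 : ‖1 - e‖ ≤ Real.sqrt 2) :
    star e = -e := by
  letI := CStarAlgebra.spectralOrder A
  haveI := CStarAlgebra.spectralOrderedRing A
  set s : A := e + star e with hs_def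
  set l : A := e * star e with hl_def
  set r : A := star e * e with hr_def
  have hl : l * l = l := by
    rw [hl_def]
    calc e * star e * (e * star e) = (e * star e * e) * star e := by noncomm_ring
      _ = e * star e := by rw [he]
  have hr : r * r = r := by
    rw [hr_def]
    calc star e * e * (star e * e) = star e * (e * star e * e) := by noncomm_ring
      _ = star e * e := by rw [he]
  have hlstar : star l = l := by rw [hl_def]; simp
  have hrstar : star r = r := by rw [hr_def]; simp
  -- the four positivity facts
  have key : ∀ u : A, ‖u‖ ≤ Real.sqrt 2 → 0 ≤ 2 - star u * u := fun u hu =>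
    sub_nonneg.mpr (aux_le_two hu)
  have hn3 : ‖(1 : A) + star e‖ ≤ Real.sqrt 2 := by
    rw [show (1 : A) + star e = star (1 + e) by simp, norm_star]; exact h1
  have hn4 : ‖(1 : A) - star e‖ ≤ Real.sqrt 2 := by
    rw [show (1 : A) - star e = star (1 - e) by simp, norm_star]; exact h2
  have e1 : (2 : A) - star (1 + e) * (1 + e) = 1 - s - r := by
    rw [star_add, star_one, hs_def, hr_def, show (2 : A) = 1 + 1 by norm_num]; noncomm_ring
  have e2 : (2 : A) - star (1 - e) * (1 - e) = 1 + s - r := by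
    rw [star_sub, star_one, hs_def, hr_def, show (2 : A) = 1 + 1 by norm_num]; noncomm_ring
  have e3 : (2 : A) - star (1 + star e) * (1 + star e) = 1 - s - l := by
    rw [star_add, star_one, star_star, hs_def, hl_def, show (2 : A) = 1 + 1 by norm_num]; noncomm_ring
  have e4 : (2 : A) - star (1 - star e) * (1 - star e) = 1 + s - l := by
    rw [star_sub, star_one, star_star, hs_def, hl_def, show (2 : A) = 1 + 1 by norm_num]; noncomm_ring
  have hA2 : (0 : A) ≤ 1 - s - r := e1 ▸ key _ h1
  have hA4 : (0 : A) ≤ 1 + s - r := e2 ▸ key _ h2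
  have hA1 : (0 : A) ≤ 1 - s - l := e3 ▸ key _ hn3
  have hA3 : (0 : A) ≤ 1 + s - l := e4 ▸ key _ hn4
  -- a general step: for a projection p with star p = p and both 1 ∓ s - p nonneg, s * p = 0
  have step : ∀ p : A, p * p = p → star p = p → (0 : A) ≤ 1 - s - p →
      (0 : A) ≤ 1 + s - p → s * p = 0 := by
    intro p hp hps hm hpl
    have comp1 : p * (1 - s - p) * p = -(p * s * p) := by
      simp only [mul_sub, sub_mul, mul_one, one_mul, hp]
      abel
    have comp2 : p * (1 + s - p) * p = p * s * p := by
      simp only [mul_add, add_mul, mul_sub, sub_mul, mul_one, one_mul, hp]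
      abel
    have c1 : (0 : A) ≤ -(p * s * p) := by
      have := star_left_conjugate_nonneg hm p
      rwa [hps, comp1] at this
    have c2 : (0 : A) ≤ p * s * p := by
      have := star_left_conjugate_nonneg hpl p
      rwa [hps, comp2] at this
    have hpsp : p * s * p = 0 := le_antisymm (neg_nonneg.mp c1) c2
    have hx : star p * (1 - s - p) * p = 0 := by rw [hps, comp1, hpsp, neg_zero]
    have hy : (1 - s - p) * p = 0 := aux_mul_eq_zero hm hx
    have h' : (1 - s - p) * p = -(s * p) := by
      simp only [sub_mul, one_mul, hp]
      abel
    rw [h'] at hy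
    exact neg_eq_zero.mp hy
  have hsl : s * l = 0 := step l hl hlstar hA1 hA3
  have hsr : s * r = 0 := step r hr hrstar hA2 hA4
  have hle : l * e = e := he
  have hre : r * star e = star e := by
    rw [hr_def]
    calc star e * e * star e = star (e * star e * e) := by simp [mul_assoc]
      _ = star e := by rw [he]
  have hse : s * e = 0 := by rw [← hle, ← mul_assoc, hsl, zero_mul]
  have hse' : s * star e = 0 := by rw [← hre, ← mul_assoc, hsr, zero_mul]
  have hss0 : s * s = 0 := by
    nth_rewrite 2 [hs_def]
    rw [mul_add, hse, hse', add_zero]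
  have hsstar : star s = s := by rw [hs_def]; simp [add_comm]
  have hs0 : s = 0 := by
    refine (CStarRing.star_mul_self_eq_zero_iff s).mp ?_
    rw [hsstar, hss0]
  have : e + star e = 0 := by rw [← hs_def, hs0]
  exact (neg_eq_of_add_eq_zero_right this).symm
end

section
/- Let A be a unital C*-algebra, u a unitary in A, and e an extreme point of the closed unit ball of A with ‖u + e‖ ≤ √2 and ‖u - e‖ ≤ √2. Then there exist projections p, q in A with pq = 0 and p + q = 1 such that e = i(p - q)u. -/
/-!
Right multiplication by the unitary `u⋆` maps the unit ball onto itself, so `w = e u⋆` is again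
an extreme point, and `‖1 ± w‖ = ‖u ± e‖ ≤ √2`. Kadison's perturbation argument shows that
`a = w⋆w` and `b = ww⋆` are projections with `(1 - b)(1 - a) = 0`: otherwise `w ± z` would stay
in the unit ball for `z = w (1 - a) / 2`, resp. `z = (1 - b)(1 - a)`. Expanding `‖1 ± w‖² ≤ 2`
gives `-(1 - a) ≤ w + w⋆ ≤ 1 - a`, and the same with `b`; compressing by the projections yields
`(w + w⋆) a = (w + w⋆) b = 0`, and as `1 = a + b - ba` this makes `w` skew-adjoint, hence
`a = b = 1`. So `s = -i w` is a self-adjoint unitary, and `p = (1 + s) / 2`, `q = 1 - p` work.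
-/

open Set Metric

lemma eq_zero_of_norm_add_le_of_norm_sub_le {E : Type*} [SeminormedAddCommGroup E]
    [NormedSpace ℝ E] {x z : E} {r : ℝ} (hx : x ∈ extremePoints ℝ (closedBall 0 r))
    (h₁ : ‖x + z‖ ≤ r) (h₂ : ‖x - z‖ ≤ r) : z = 0 := by
  have hmid : x ∈ openSegment ℝ (x + z) (x - z) :=
    ⟨1 / 2, 1 / 2, by norm_num, by norm_num, by norm_num, by module⟩
  simpa using hx.2 (by simpa using h₁) (by simpa using h₂) hmid

lemma isStarProjection_inv_two_smul_one_add {R : Type*} [Ring R] [StarRing R] [Module ℝ R]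
    [StarModule ℝ R] [IsScalarTower ℝ R R] [SMulCommClass ℝ R R] {s : R}
    (hs : IsSelfAdjoint s) (hs₂ : s * s = 1) : IsStarProjection ((2⁻¹ : ℝ) • (1 + s)) where
  isIdempotentElem := by
    simp only [IsIdempotentElem, smul_mul_smul_comm, add_mul, mul_add, hs₂, one_mul, mul_one]
    module
  isSelfAdjoint := (IsSelfAdjoint.all _).smul ((IsSelfAdjoint.one R).add hs)

section CStarRing

variable {R : Type*} [NonUnitalNormedRing R] [StarRing R] [CStarRing R] {w : R}

lemma mul_star_mul_self_of_isStarProjection (h : IsStarProjection (star w * w)) :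
    w * (star w * w) = w := by
  have hsq : star (w * (star w * w) - w) * (w * (star w * w) - w) = 0 := by
    have e : star (w * (star w * w) - w) * (w * (star w * w) - w) =
        (star w * w) * (star w * w) * (star w * w) - (star w * w) * (star w * w)
          - (star w * w) * (star w * w) + star w * w := by
      simp only [star_sub, star_mul, star_star]; noncomm_ring
    rw [e, h.isIdempotentElem.eq, h.isIdempotentElem.eq, sub_self, zero_sub, neg_add_cancel]
  exact sub_eq_zero.mp (CStarRing.star_mul_self_eq_zero_iff _ |>.mp hsq)

lemma IsStarProjection.mul_star_self_of_star_mul_self (h : IsStarProjection (star w * w)) :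
    IsStarProjection (w * star w) where
  isIdempotentElem := by
    rw [IsIdempotentElem, mul_assoc, ← mul_assoc (star w), ← mul_assoc w,
      mul_star_mul_self_of_isStarProjection h]
  isSelfAdjoint := .mul_star_self w

end CStarRing

lemma mul_eq_zero_of_star_mul_mul_eq_zero {B : Type*} [NonUnitalCStarAlgebra B] [PartialOrder B]
    [StarOrderedRing B] {y x : B} (hy : 0 ≤ y) (h : star x * y * x = 0) : y * x = 0 := by
  rw [← norm_eq_zero, CFC.norm_star_mul_mul_self_of_nonneg x hy, sq_eq_zero_iff,
    norm_eq_zero] at h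
  rw [← CFC.sqrt_mul_sqrt_self y hy, mul_assoc, h, mul_zero]

section CStarAlgebra

variable {A : Type*} [CStarAlgebra A]

lemma mul_mem_extremePoints_closedBall {e u : A}
    (he : e ∈ extremePoints ℝ (closedBall 0 1)) (hu : u ∈ unitary A) :
    e * u ∈ extremePoints ℝ (closedBall (0 : A) 1) := by
  have h := image_extremePoints (Unitary.mulRight ℝ ⟨u, hu⟩) (closedBall (0 : A) 1)
  rw [LinearIsometryEquiv.image_closedBall, map_zero] at h
  exact h ▸ ⟨e, he, rfl⟩

variable [PartialOrder A] [StarOrderedRing A]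

lemma spectrum_star_mul_self_subset_Icc {w : A} (hw : ‖w‖ ≤ 1) :
    spectrum ℝ (star w * w) ⊆ Icc 0 1 := by
  have hle : star w * w ≤ algebraMap ℝ A 1 := by
    rw [map_one, ← CStarAlgebra.norm_le_one_iff_of_nonneg _ (star_mul_self_nonneg w),
      CStarRing.norm_star_mul_self]
    exact mul_le_one₀ hw (norm_nonneg w) hw
  exact fun t ht => ⟨spectrum_nonneg_of_nonneg (star_mul_self_nonneg w) ht,
    (le_algebraMap_iff_spectrum_le (IsSelfAdjoint.star_mul_self w)).mp hle t ht⟩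

lemma norm_mul_cfc_star_mul_self_le_one (w : A) {g : ℝ → ℝ}
    (hg : ContinuousOn g (spectrum ℝ (star w * w)))
    (h : ∀ t ∈ spectrum ℝ (star w * w), t * g t ^ 2 ≤ 1) :
    ‖w * cfc g (star w * w)‖ ≤ 1 := by
  set a := star w * w
  have hsq : star (w * cfc g a) * (w * cfc g a) = cfc (fun t => g t * (t * g t)) a := by
    rw [cfc_mul .., cfc_mul (fun t => t) g a, cfc_id' ℝ a, star_mul,
      (cfc_predicate g a).star_eq, mul_assoc, ← mul_assoc (star w)]
  rw [← sq_le_one_iff₀ (norm_nonneg _), sq, ← CStarRing.norm_star_mul_self, hsq]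
  refine norm_cfc_le zero_le_one fun t ht => ?_
  have ht0 : 0 ≤ t := spectrum_nonneg_of_nonneg (star_mul_self_nonneg w) ht
  rw [Real.norm_of_nonneg (by nlinarith [sq_nonneg (g t)])]
  linarith [h t ht]

lemma isStarProjection_star_mul_self_of_mem_extremePoints {w : A}
    (hw : w ∈ extremePoints ℝ (closedBall 0 1)) : IsStarProjection (star w * w) := by
  set a := star w * w
  have hspec := spectrum_star_mul_self_subset_Icc (mem_closedBall_zero_iff.mp hw.1)
  set f : ℝ → ℝ := fun t => (1 - t) / 2
  have hz : w * cfc f a = 0 := by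
    refine eq_zero_of_norm_add_le_of_norm_sub_le hw ?_ ?_
    · have h := norm_mul_cfc_star_mul_self_le_one w (g := fun t => 1 + f t) (by fun_prop)
        fun t ht => by
          obtain ⟨h0, h1⟩ := hspec ht
          simp only [f]
          nlinarith [mul_nonneg (sq_nonneg (1 - t)) (by linarith : (0 : ℝ) ≤ 4 - t)]
      rwa [cfc_const_add .., map_one, mul_add, mul_one] at h
    · have h := norm_mul_cfc_star_mul_self_le_one w (g := fun t => 1 + -f t) (by fun_prop)
        fun t ht => by
          obtain ⟨h0, h1⟩ := hspec ht
          simp only [f]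
          nlinarith [mul_nonneg h0 (sub_nonneg.2 h1),
            mul_nonneg (mul_nonneg h0 h0) (sub_nonneg.2 h1)]
      rwa [cfc_const_add .., cfc_neg, map_one, mul_add, mul_one, mul_neg,
        ← sub_eq_add_neg] at h
  have hcfc : cfc (fun t => t * f t) a = cfc (0 : ℝ → ℝ) a := by
    rw [cfc_zero, cfc_mul (fun t => t) f a, cfc_id' ℝ a, mul_assoc, hz, mul_zero]
  rw [isStarProjection_iff_spectrum_subset_and_isSelfAdjoint]
  refine ⟨fun t ht => ?_, IsSelfAdjoint.star_mul_self w⟩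
  have h : t * ((1 - t) / 2) = 0 :=
    eqOn_of_cfc_eq_cfc hcfc (by fun_prop) (by fun_prop) (.star_mul_self w) ht
  rcases mul_eq_zero.mp h with h | h
  · exact .inl h
  · exact .inr (show t = 1 by linarith)

lemma norm_add_le_one_of_star_mul_eq_zero {w z : A} (hwz : star w * z = 0)
    (hz : star z * z ≤ 1 - star w * w) : ‖w + z‖ ≤ 1 := by
  have hzw : star z * w = 0 := by simpa using congr(star $hwz)
  have hsq : star (w + z) * (w + z) = star w * w + star z * z := by
    simp only [star_add, add_mul, mul_add, hwz, hzw, add_zero, zero_add]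
  rw [← sq_le_one_iff₀ (norm_nonneg _), sq, ← CStarRing.norm_star_mul_self,
    CStarAlgebra.norm_le_one_iff_of_nonneg _ (star_mul_self_nonneg _), hsq]
  exact le_sub_iff_add_le'.mp hz

lemma one_sub_mul_star_self_mul_one_sub_star_mul_self_eq_zero {w : A}
    (hw : w ∈ extremePoints ℝ (closedBall 0 1)) :
    (1 - w * star w) * (1 - star w * w) = 0 := by
  have ha := isStarProjection_star_mul_self_of_mem_extremePoints hw
  have hb := ha.mul_star_self_of_star_mul_self
  set z := (1 - w * star w) * (1 - star w * w)
  have hwz : star w * z = 0 := by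
    have : star w * (w * star w) = star w := by
      simpa [mul_assoc] using congr(star $(mul_star_mul_self_of_isStarProjection ha))
    simp only [z, ← mul_assoc, mul_sub, mul_one, this, sub_self, zero_mul]
  have hzz : star z * z ≤ 1 - star w * w := by
    have hz : star z * z = (1 - star w * w) * (1 - w * star w) * (1 - star w * w) := by
      simp only [z, star_mul, hb.one_sub.isSelfAdjoint.star_eq, ha.one_sub.isSelfAdjoint.star_eq]
      rw [mul_assoc, ← mul_assoc (1 - w * star w), hb.one_sub.isIdempotentElem.eq, mul_assoc]
    calc star z * z ≤ (1 - star w * w) * 1 * (1 - star w * w) := by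
          rw [hz]; exact ha.one_sub.isSelfAdjoint.conjugate_le_conjugate hb.one_sub.le_one
      _ = 1 - star w * w := by rw [mul_one, ha.one_sub.isIdempotentElem.eq]
  refine eq_zero_of_norm_add_le_of_norm_sub_le hw (norm_add_le_one_of_star_mul_eq_zero hwz hzz) ?_
  rw [sub_eq_add_neg]
  exact norm_add_le_one_of_star_mul_eq_zero (by rw [mul_neg, hwz, neg_zero])
    (by rwa [star_neg, neg_mul_neg])

lemma IsStarProjection.mul_eq_zero_of_le_one_sub {p x : A} (hp : IsStarProjection p)
    (h₁ : x ≤ 1 - p) (h₂ : -x ≤ 1 - p) : x * p = 0 := by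
  have hconj : ∀ y : A, p * (1 - p - y) * p = -(p * y * p) := fun y => by
    simp only [mul_sub, mul_one, hp.isIdempotentElem.eq, sub_self, zero_sub, neg_mul]
  have hpos : ∀ y : A, y ≤ 1 - p → 0 ≤ p * (1 - p - y) * p := fun y hy =>
    hp.isSelfAdjoint.conjugate_nonneg (sub_nonneg.mpr hy)
  have hpxp : p * x * p = 0 := le_antisymm
    (neg_nonneg.mp (hconj x ▸ hpos x h₁))
    (by simpa only [hconj, mul_neg, neg_mul, neg_neg] using hpos (-x) h₂)
  have h := mul_eq_zero_of_star_mul_mul_eq_zero (sub_nonneg.mpr h₁)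
    (x := p) (by rw [hp.isSelfAdjoint.star_eq, hconj, hpxp, neg_zero])
  simpa [sub_mul, hp.isIdempotentElem.eq] using h

lemma star_mul_self_le_two_of_norm_le_sqrt_two {x : A} (h : ‖x‖ ≤ √2) : star x * x ≤ 2 := by
  rw [← map_ofNat (algebraMap ℝ A) 2, ← CStarAlgebra.norm_le_iff_le_algebraMap _ zero_le_two
    (star_mul_self_nonneg x), CStarRing.norm_star_mul_self]
  calc ‖x‖ * ‖x‖ ≤ √2 * √2 := mul_self_le_mul_self (norm_nonneg x) h
    _ = 2 := Real.mul_self_sqrt zero_le_two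

lemma add_star_le_one_sub_star_mul_self {w : A} (h : ‖1 + w‖ ≤ √2) :
    w + star w ≤ 1 - star w * w := by
  have e : star (1 + w) * (1 + w) = 1 + (w + star w) + star w * w := by
    simp only [star_add, star_one]; noncomm_ring
  calc w + star w = star (1 + w) * (1 + w) - 1 - star w * w := by rw [e]; abel
    _ ≤ 2 - 1 - star w * w := by gcongr; exact star_mul_self_le_two_of_norm_le_sqrt_two h
    _ = 1 - star w * w := by norm_num

lemma add_star_le_one_sub_mul_star_self {w : A} (h : ‖1 + w‖ ≤ √2) :
    w + star w ≤ 1 - w * star w := by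
  simpa [add_comm w] using
    add_star_le_one_sub_star_mul_self (w := star w) (by rwa [← star_one, ← star_add, norm_star])

theorem star_eq_neg_and_star_mul_self_eq_one_of_mem_extremePoints {w : A}
    (hw : w ∈ extremePoints ℝ (closedBall 0 1)) (h₁ : ‖1 + w‖ ≤ √2) (h₂ : ‖1 - w‖ ≤ √2) :
    star w = -w ∧ star w * w = 1 := by
  have ha := isStarProjection_star_mul_self_of_mem_extremePoints hw
  have hb := ha.mul_star_self_of_star_mul_self
  have hab := one_sub_mul_star_self_mul_one_sub_star_mul_self_eq_zero hw
  rw [sub_eq_add_neg] at h₂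
  have hxa : (w + star w) * (star w * w) = 0 := ha.mul_eq_zero_of_le_one_sub
    (add_star_le_one_sub_star_mul_self h₁)
    (by simpa [add_comm] using add_star_le_one_sub_star_mul_self h₂)
  have hxb : (w + star w) * (w * star w) = 0 := hb.mul_eq_zero_of_le_one_sub
    (add_star_le_one_sub_mul_star_self h₁)
    (by simpa [add_comm] using add_star_le_one_sub_mul_star_self h₂)
  have hstar : star w = -w := by
    refine eq_neg_of_add_eq_zero_right ?_
    calc w + star w = (w + star w) * ((1 - w * star w) * (1 - star w * w))
          + (w + star w) * (w * star w) + (w + star w) * (star w * w)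
          - (w + star w) * (w * star w) * (star w * w) := by noncomm_ring
      _ = 0 := by rw [hab, hxa, hxb]; simp
  have hba : w * star w = star w * w := by rw [hstar, mul_neg, neg_mul]
  refine ⟨hstar, (sub_eq_zero.mp ?_).symm⟩
  rw [← ha.one_sub.isIdempotentElem.eq]
  nth_rw 1 [← hba]
  exact hab

end CStarAlgebra

theorem stmt_10 {A : Type*} [CStarAlgebra A]
    (u : A) (hu : u * star u = 1) (hu' : star u * u = 1)
    (e : A) (he : e ∈ Set.extremePoints ℝ (Metric.closedBall (0 : A) 1))
    (h1 : ‖u + e‖ ≤ Real.sqrt 2) (h2 : ‖u - e‖ ≤ Real.sqrt 2) :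
    ∃ p q : A, star p = p ∧ p * p = p ∧ star q = q ∧ q * q = q ∧
      p * q = 0 ∧ p + q = 1 ∧ e = Complex.I • ((p - q) * u) := by
  let _ := CStarAlgebra.spectralOrder A
  let _ := CStarAlgebra.spectralOrderedRing A
  have hu_star : star u ∈ unitary A := Unitary.star_mem (Unitary.mem_iff.mpr ⟨hu', hu⟩)
  have hnorm (x : A) : ‖x‖ = ‖x * star u‖ := (CStarRing.norm_mul_mem_unitary x hu_star).symm
  obtain ⟨hskew, hunit⟩ :
      star (e * star u) = -(e * star u) ∧ star (e * star u) * (e * star u) = 1 :=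
    star_eq_neg_and_star_mul_self_eq_one_of_mem_extremePoints
      (mul_mem_extremePoints_closedBall he hu_star)
      (by rwa [hnorm, add_mul, hu] at h1) (by rwa [hnorm, sub_mul, hu] at h2)
  set s := (-Complex.I) • (e * star u)
  have hp := isStarProjection_inv_two_smul_one_add (s := s)
    (by simp [s, IsSelfAdjoint, star_smul, hskew]) (by simp [s, smul_smul, ← hunit, hskew])
  refine ⟨_, _, hp.isSelfAdjoint, hp.isIdempotentElem, hp.one_sub.isSelfAdjoint,
    hp.one_sub.isIdempotentElem, hp.mul_one_sub_self, add_sub_cancel _ _, ?_⟩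
  have hps : (2⁻¹ : ℝ) • (1 + s) - (1 - (2⁻¹ : ℝ) • (1 + s)) = s := by module
  rw [hps, smul_mul_assoc, mul_assoc, hu', mul_one, smul_smul]
  simp
end

section
/- Let B be a unital C*-algebra, l a projection in B, and y ∈ B with y*y = 1 and ‖(1-l)(y + y*)(1-l)‖ ≤ 2. For θ ∈ ℝ set y_θ = y l + cos(θ) y (1-l) + sin(θ)(1-l). Then ‖y - y_θ‖² = ‖(y - y_θ)*(y - y_θ)‖ ≤ 2(1 - cos θ)(1 + |sin θ|), and in particular y_θ → y in norm as θ → 0. -/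
lemma stmt_14_aux {B : Type*} [CStarAlgebra B] (p z : B) (hp : p * p = p)
    (hz : star z * z = 1) (u s : ℂ) :
    (u • (p * star z) - s • p) * (u • (z * p) - s • p)
      = (u * u + s * s) • p - (u * s) • (p * (z + star z) * p) := by
  have e1 : p * star z * (z * p) = p := by
    rw [mul_assoc, ← mul_assoc (star z), hz, one_mul, hp]
  have e2 : p * star z * p + p * (z * p) = p * (z + star z) * p := by
    rw [mul_add, add_mul, mul_assoc p z p]; abel
  rw [sub_mul, mul_sub, mul_sub, smul_mul_smul_comm, smul_mul_smul_comm,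
    smul_mul_smul_comm, smul_mul_smul_comm, e1, hp, ← e2]
  module

theorem stmt_14 {B : Type*} [CStarAlgebra B]
    (l y : B) (hl_sa : star l = l) (hl_idem : l * l = l)
    (hy : star y * y = 1)
    (hbound : ‖(1 - l) * (y + star y) * (1 - l)‖ ≤ 2) :
    (∀ θ : ℝ,
      ‖y - (y * l + (Real.cos θ : ℂ) • (y * (1 - l)) + (Real.sin θ : ℂ) • (1 - l))‖ ^ 2 ≤
        2 * (1 - Real.cos θ) * (1 + |Real.sin θ|)) ∧
    Filter.Tendsto
      (fun θ : ℝ => y * l + (Real.cos θ : ℂ) • (y * (1 - l)) + (Real.sin θ : ℂ) • (1 - l))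
      (nhds 0) (nhds y) := by
  have hp_sa : star (1 - l) = 1 - l := by simp [hl_sa]
  have hp : (1 - l) * (1 - l) = 1 - l := by
    simp only [mul_sub, sub_mul, mul_one, one_mul, hl_idem]; abel
  have hysplit : y * l + y * (1 - l) = y := by rw [mul_sub, mul_one]; abel
  have hpn : ‖(1 : B) - l‖ ≤ 1 := by
    have h1 : ‖star ((1:B) - l) * ((1:B) - l)‖ = ‖(1:B) - l‖ * ‖(1:B) - l‖ :=
      CStarRing.norm_star_mul_self
    rw [hp_sa, hp] at h1
    nlinarith [norm_nonneg ((1:B) - l)]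
  constructor
  · intro θ
    set c : ℂ := (Real.cos θ : ℂ) with hc
    set s : ℂ := (Real.sin θ : ℂ) with hs
    set d : B := y - (y * l + c • (y * (1 - l)) + s • (1 - l)) with hdd
    have hd : d = (1 - c) • (y * (1 - l)) - s • (1 - l) := by
      rw [hdd, sub_smul, one_smul]
      nth_rewrite 1 [← hysplit]
      abel
    have hcs : star c = c := by rw [hc]; exact Complex.conj_ofReal _
    have hss : star s = s := by rw [hs]; exact Complex.conj_ofReal _
    have hstard : star d = (1 - c) • ((1 - l) * star y) - s • (1 - l) := by
      rw [hd, star_sub, star_smul, star_smul, star_mul, hp_sa, star_sub, star_one,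
        hcs, hss]
    have pyth : c * c + s * s = 1 := by
      rw [hc, hs]
      push_cast
      linear_combination Complex.cos_sq_add_sin_sq (θ:ℂ)
    have key : star d * d = ((2 * (1 - Real.cos θ) : ℝ) : ℂ) • ((1:B) - l)
        - (((1 - Real.cos θ) * Real.sin θ : ℝ) : ℂ) • ((1 - l) * (y + star y) * (1 - l)) := by
      rw [hstard, hd, stmt_14_aux (1 - l) y hp hy (1 - c) s]
      have hcoef : ((2 * (1 - Real.cos θ) : ℝ) : ℂ) = (1 - c) * (1 - c) + s * s := by
        push_cast [hc, hs]
        push_cast [hc, hs] at pyth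
        linear_combination -pyth
      have hcoef2 : (((1 - Real.cos θ) * Real.sin θ : ℝ) : ℂ) = (1 - c) * s := by
        push_cast [hc, hs]; ring
      rw [hcoef, hcoef2]
    have h0 : (0:ℝ) ≤ 1 - Real.cos θ := by nlinarith [Real.cos_le_one θ]
    have hnorm : ‖star d * d‖ ≤ 2 * (1 - Real.cos θ) * (1 + |Real.sin θ|) := by
      rw [key]
      have n1 : ‖((2 * (1 - Real.cos θ) : ℝ) : ℂ)‖ = 2 * (1 - Real.cos θ) := by
        rw [Complex.norm_real, Real.norm_eq_abs, abs_of_nonneg (by linarith)]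
      have n2 : ‖(((1 - Real.cos θ) * Real.sin θ : ℝ) : ℂ)‖
          = (1 - Real.cos θ) * |Real.sin θ| := by
        rw [Complex.norm_real, Real.norm_eq_abs, abs_mul, abs_of_nonneg h0]
      calc ‖_ - _‖ ≤ ‖((2 * (1 - Real.cos θ) : ℝ) : ℂ) • ((1:B) - l)‖
            + ‖(((1 - Real.cos θ) * Real.sin θ : ℝ) : ℂ) • ((1 - l) * (y + star y) * (1 - l))‖ :=
          norm_sub_le _ _
        _ = (2 * (1 - Real.cos θ)) * ‖(1:B) - l‖
            + ((1 - Real.cos θ) * |Real.sin θ|) * ‖(1 - l) * (y + star y) * (1 - l)‖ := by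
          rw [norm_smul, norm_smul, n1, n2]
        _ ≤ (2 * (1 - Real.cos θ)) * 1 + ((1 - Real.cos θ) * |Real.sin θ|) * 2 := by
          gcongr
        _ = 2 * (1 - Real.cos θ) * (1 + |Real.sin θ|) := by ring
    have hsq : ‖d‖ ^ 2 = ‖star d * d‖ := by
      rw [CStarRing.norm_star_mul_self, sq]
    rw [hsq]
    exact hnorm
  · have hcont : Continuous (fun θ : ℝ =>
        y * l + (Real.cos θ : ℂ) • (y * (1 - l)) + (Real.sin θ : ℂ) • (1 - l)) := by
      fun_prop
    have := hcont.tendsto 0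
    simpa [hysplit] using this
end

section
/- Let A be a unital C*-algebra that is the closed linear span of products of elements from a generating set, and let e₁, e₂ be orthogonal partial isometries in A (e₁e₂* = 0 = e₂*e₁ and e₁*e₂ = 0 = e₂e₁*). Fix t ∈ (0,1) and set e = e₁ + t e₂. Define the odd 'triple powers' by x^[1] := x and x^[2n+1] := x x* x^[2n-1]. Then e^[2n-1] = e₁ + t^{2n-1} e₂ for all n ≥ 1, and hence e^[2n-1] → e₁ in norm as n → ∞. -/
/-- The odd triple powers: `triplePow x 0 = x = x^[1]`,
`triplePow x (n+1) = x * x* * (triplePow x n)`, i.e. `x^[2n+1]`. -/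
noncomputable def triplePow {A : Type*} [NonUnitalCStarAlgebra A] (x : A) : ℕ → A
  | 0 => x
  | n + 1 => x * star x * triplePow x n

theorem stmt_17 {A : Type*} [CStarAlgebra A]
    (e₁ e₂ : A) (he₁ : e₁ * star e₁ * e₁ = e₁) (he₂ : e₂ * star e₂ * e₂ = e₂)
    (h12 : e₁ * star e₂ = 0) (h21 : star e₂ * e₁ = 0)
    (h12' : star e₁ * e₂ = 0) (h21' : e₂ * star e₁ = 0)
    (t : ℝ) (ht : t ∈ Set.Ioo (0 : ℝ) 1) :
    (∀ n : ℕ, triplePow (e₁ + (t : ℂ) • e₂) n = e₁ + ((t : ℂ) ^ (2 * n + 1)) • e₂) ∧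
    Filter.Tendsto (triplePow (e₁ + (t : ℂ) • e₂)) Filter.atTop (nhds e₁) := by
  have hkey : ∀ n : ℕ, triplePow (e₁ + (t : ℂ) • e₂) n = e₁ + ((t : ℂ) ^ (2 * n + 1)) • e₂ := by
    intro n
    induction n with
    | zero => simp [triplePow]
    | succ n ih =>
        rw [triplePow, ih]
        have hstar : star ((t : ℂ) • e₂) = (t : ℂ) • star e₂ := by
          simp [star_smul, Complex.star_def, Complex.conj_ofReal]
        simp only [star_add, hstar, add_mul, mul_add, smul_mul_assoc, mul_smul_comm,
          h12, h12', h21, h21', smul_zero, zero_add, add_zero, smul_smul]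
        rw [he₁]
        have he₂' : e₂ * star e₂ * e₂ = e₂ := he₂
        have h1 : e₁ * star e₁ * e₂ = 0 := by rw [mul_assoc, h12', mul_zero]
        have h2 : e₂ * star e₂ * e₁ = 0 := by rw [mul_assoc, h21, mul_zero]
        rw [h1, h2, he₂']
        simp only [smul_zero, add_zero, zero_add]
        ring_nf
        rw [smul_smul]
        congr 1
        ring
  refine ⟨hkey, ?_⟩
  obtain ⟨ht0, ht1⟩ := ht
  have habs : |t| < 1 := by rw [abs_of_pos ht0]; exact ht1
  have htend : Filter.Tendsto (fun n : ℕ => ((t : ℂ) ^ (2 * n + 1)) • e₂)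
      Filter.atTop (nhds ((0 : A))) := by
    have h1 : Filter.Tendsto (fun n : ℕ => (t : ℂ) ^ (2 * n + 1)) Filter.atTop (nhds 0) := by
      have : Filter.Tendsto (fun m : ℕ => (t : ℂ) ^ m) Filter.atTop (nhds 0) := by
        apply tendsto_pow_atTop_nhds_zero_of_norm_lt_one
        simpa using habs
      exact this.comp (Filter.tendsto_atTop_mono (fun n => by simp only [id_eq]; omega)
        Filter.tendsto_id)
    simpa using h1.smul_const e₂
  have := htend.const_add e₁
  rw [add_zero] at this
  exact (Filter.tendsto_congr fun n => (hkey n).symm).mp this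
end

section
/- Let M be a unital JC*-algebra realized inside B(H), i.e., A = B(H), and let u be an isometry in A (u*u = 1) with l = uu* ≠ 1. Let p, q be projections with pq = 0, p + q = l, central in lAl, and y = i(p - q)u. For θ ∈ ℝ define y_θ = y l + cos(θ) y (1 - l) + sin(θ)(1 - l). Then (y - y_θ)*(y - y_θ) = 2(1 - cos θ)((1 - l) - sin(θ)·a) where a = (1-l)((y + y*)/2)(1-l), and consequently y_θ ≠ y for all θ ∉ 2πℤ ∪ (π/2)(1 + 2ℤ). -/
/-!
Write `e = 1 - l`. Then `y - y_θ = (1 - cos θ) • y e - sin θ • e`, and since `y` is an isometry,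
`(y e)⋆ (y e) = e`; expanding the square and using `(1 - cos θ)² + sin² θ = 2 (1 - cos θ)` gives
the identity. If `y_θ = y` and `cos θ ≠ 1`, the identity forces `e = sin θ • a`; as `a = e x e`
with `‖x‖ ≤ 1`, this gives `‖e‖ ≤ |sin θ| ‖e‖`, so `|sin θ| < 1` forces `e = 0`, i.e. `l = 1`.
-/

open Complex

lemma IsStarProjection.sub_mul_sub_self_of_mul_eq_zero {R : Type*} [Ring R] [StarRing R]
    {p q : R} (hp : IsStarProjection p) (hq : IsStarProjection q) (hpq : p * q = 0) :
    (p - q) * (p - q) = p + q := by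
  have hqp : q * p = 0 := by
    simpa [hp.isSelfAdjoint.star_eq, hq.isSelfAdjoint.star_eq] using congrArg star hpq
  rw [mul_sub, sub_mul, sub_mul, hp.isIdempotentElem.eq, hq.isIdempotentElem.eq, hpq, hqp]
  abel

lemma isStarProjection_mul_star_of_star_mul_eq_one {R : Type*} [Monoid R] [StarMul R] {u : R}
    (hu : star u * u = 1) : IsStarProjection (u * star u) where
  isIdempotentElem := by
    rw [IsIdempotentElem, mul_assoc, ← mul_assoc (star u), hu, one_mul]
  isSelfAdjoint := by simp [IsSelfAdjoint, star_mul]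

lemma star_mul_self_mul_eq_one_of_mul_self_eq {R : Type*} [Monoid R] [StarMul R] {s u : R}
    (hs : IsSelfAdjoint s) (hss : s * s = u * star u) (hu : star u * u = 1) :
    star (s * u) * (s * u) = 1 := by
  rw [star_mul, hs.star_eq, mul_assoc, ← mul_assoc s, hss, ← mul_assoc, ← mul_assoc, hu, one_mul,
    hu]

section Rotation

variable {A : Type*} [Ring A] [Algebra ℂ A]

noncomputable def isometryRotation (y l : A) (θ : ℝ) : A :=
  y * l + (Real.cos θ : ℂ) • (y * (1 - l)) + (Real.sin θ : ℂ) • (1 - l)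

lemma sub_isometryRotation (y l : A) (θ : ℝ) :
    y - isometryRotation y l θ =
      ((1 - Real.cos θ : ℝ) : ℂ) • (y * (1 - l)) - (Real.sin θ : ℂ) • (1 - l) := by
  rw [isometryRotation, mul_sub y 1 l, mul_one]
  push_cast
  module

variable [StarRing A] [StarModule ℂ A]

lemma star_I_smul_mul_I_smul (x : A) : star (I • x) * (I • x) = star x * x := by
  rw [star_smul, smul_mul_smul_comm, Complex.star_def, conj_I, neg_mul, I_mul_I, neg_neg,
    one_smul]

lemma star_mul_self_smul_mul_sub_smul {y e : A} (hy : star y * y = 1) (he : IsStarProjection e)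
    (c s : ℝ) :
    star ((c : ℂ) • (y * e) - (s : ℂ) • e) * ((c : ℂ) • (y * e) - (s : ℂ) • e) =
      ((c ^ 2 + s ^ 2 : ℝ) : ℂ) • e - ((c * s : ℝ) : ℂ) • (e * (y + star y) * e) := by
  have hee : e * e = e := he.isIdempotentElem.eq
  have hye : star (y * e) * (y * e) = e := by
    rw [star_mul, he.isSelfAdjoint.star_eq, mul_assoc, ← mul_assoc (star y), hy, one_mul, hee]
  simp only [star_sub, star_smul, Complex.star_def, conj_ofReal, he.isSelfAdjoint.star_eq,
    sub_mul, mul_sub, smul_mul_smul_comm, hye, hee]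
  rw [star_mul, he.isSelfAdjoint.star_eq, ← mul_assoc, mul_add, add_mul]
  push_cast
  module

theorem star_mul_self_sub_isometryRotation {y l : A} (hy : star y * y = 1)
    (hl : IsStarProjection l) (θ : ℝ) :
    star (y - isometryRotation y l θ) * (y - isometryRotation y l θ) =
      ((2 * (1 - Real.cos θ) : ℝ) : ℂ) •
        ((1 - l) - (Real.sin θ : ℂ) • ((1 - l) * ((1 / 2 : ℂ) • (y + star y)) * (1 - l))) := by
  rw [sub_isometryRotation, star_mul_self_smul_mul_sub_smul hy hl.one_sub, mul_smul_comm,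
    smul_mul_assoc]
  have hpyth : (1 - Real.cos θ) ^ 2 + Real.sin θ ^ 2 = 2 * (1 - Real.cos θ) := by
    nlinarith [Real.sin_sq_add_cos_sq θ]
  rw [hpyth]
  push_cast
  module

end Rotation

lemma norm_half_smul_add_star_le {E : Type*} [SeminormedAddCommGroup E] [StarAddMonoid E]
    [NormedStarGroup E] [NormedSpace ℂ E] {x : E} (hx : ‖x‖ ≤ 1) :
    ‖(1 / 2 : ℂ) • (x + star x)‖ ≤ 1 := by
  calc ‖(1 / 2 : ℂ) • (x + star x)‖ = 1 / 2 * ‖x + star x‖ := by rw [norm_smul]; norm_num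
    _ ≤ 1 / 2 * (‖x‖ + ‖star x‖) := by gcongr; exact norm_add_le _ _
    _ ≤ 1 := by rw [norm_star]; linarith

section CStarRing

variable {A : Type*} [NormedRing A] [StarRing A] [CStarRing A]

lemma norm_le_one_of_star_mul_self_eq_one {y : A} (hy : star y * y = 1) : ‖y‖ ≤ 1 := by
  have h : ‖y‖ * ‖y‖ ≤ 1 := by
    rw [← CStarRing.norm_star_mul_self, hy]
    exact (IsStarProjection.one A).norm_le
  nlinarith [norm_nonneg y]

lemma IsStarProjection.sub_smul_mul_mul_self_ne_zero [NormedAlgebra ℂ A] {e x : A}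
    (he : IsStarProjection e) (he0 : e ≠ 0) (hx : ‖x‖ ≤ 1) {t : ℝ} (ht : |t| < 1) :
    e - (t : ℂ) • (e * x * e) ≠ 0 := by
  intro h
  have he1 : ‖e‖ ≤ 1 := he.norm_le e
  have hexe : ‖e * x * e‖ ≤ ‖e‖ :=
    calc ‖e * x * e‖ ≤ ‖e‖ * ‖x‖ * ‖e‖ := norm_mul₃_le
      _ ≤ ‖e‖ * 1 * 1 := by gcongr
      _ = ‖e‖ := by ring
  have hle : ‖e‖ ≤ |t| * ‖e‖ := by
    calc ‖e‖ = ‖(t : ℂ) • (e * x * e)‖ := congrArg norm (sub_eq_zero.1 h)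
      _ = |t| * ‖e * x * e‖ := by rw [norm_smul, Complex.norm_real, Real.norm_eq_abs]
      _ ≤ |t| * ‖e‖ := by gcongr
  have : ‖e‖ ≤ 0 := by nlinarith [norm_nonneg e]
  exact he0 (norm_le_zero_iff.1 this)

end CStarRing

lemma Real.cos_ne_one_of_forall_ne {θ : ℝ} (h : ∀ k : ℤ, θ ≠ 2 * Real.pi * k) :
    Real.cos θ ≠ 1 := by
  rw [Ne, Real.cos_eq_one_iff]
  rintro ⟨k, hk⟩
  exact h k (by rw [← hk]; ring)

lemma Real.abs_sin_lt_one_of_forall_ne {θ : ℝ} (h : ∀ k : ℤ, θ ≠ (Real.pi / 2) * (1 + 2 * k)) :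
    |Real.sin θ| < 1 := by
  refine (Real.abs_sin_le_one θ).lt_of_ne ?_
  rw [Ne, Real.abs_sin_eq_one_iff]
  rintro ⟨k, hk⟩
  exact h k (by rw [← hk]; ring)

theorem stmt_19_general {A : Type*} [CStarAlgebra A]
    (u : A) (hu : star u * u = 1) (hl : u * star u ≠ 1)
    (p q : A) (hp_sa : star p = p) (hp_idem : p * p = p)
    (hq_sa : star q = q) (hq_idem : q * q = q)
    (h_orth : p * q = 0) (h_sum : p + q = u * star u) :
    let l := u * star u
    let y := Complex.I • ((p - q) * u)
    let a := (1 - l) * ((1 / 2 : ℂ) • (y + star y)) * (1 - l)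
    let yθ : ℝ → A := fun θ =>
      y * l + (Real.cos θ : ℂ) • (y * (1 - l)) + (Real.sin θ : ℂ) • (1 - l)
    (∀ θ : ℝ, star (y - yθ θ) * (y - yθ θ) =
      ((2 * (1 - Real.cos θ) : ℝ) : ℂ) • ((1 - l) - (Real.sin θ : ℂ) • a)) ∧
    (∀ θ : ℝ, (∀ k : ℤ, θ ≠ 2 * Real.pi * k) →
      (∀ k : ℤ, θ ≠ (Real.pi / 2) * (1 + 2 * k)) → yθ θ ≠ y) := by
  intro l y a yθ
  have hp : IsStarProjection p := ⟨hp_idem, hp_sa⟩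
  have hq : IsStarProjection q := ⟨hq_idem, hq_sa⟩
  have hl_proj : IsStarProjection l := isStarProjection_mul_star_of_star_mul_eq_one hu
  have hy : star y * y = 1 := by
    rw [star_I_smul_mul_I_smul]
    refine star_mul_self_mul_eq_one_of_mul_self_eq (hp.isSelfAdjoint.sub hq.isSelfAdjoint) ?_ hu
    rw [hp.sub_mul_sub_self_of_mul_eq_zero hq h_orth, h_sum]
  have hmain (θ : ℝ) := star_mul_self_sub_isometryRotation hy hl_proj θ
  refine ⟨hmain, fun θ h2π hπ2 hfix => ?_⟩
  have hcoef : ((2 * (1 - Real.cos θ) : ℝ) : ℂ) ≠ 0 := by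
    have := Real.cos_ne_one_of_forall_ne h2π
    exact_mod_cast mul_ne_zero two_ne_zero (sub_ne_zero.2 this.symm)
  refine hl_proj.one_sub.sub_smul_mul_mul_self_ne_zero (sub_ne_zero.2 hl.symm)
    (norm_half_smul_add_star_le (norm_le_one_of_star_mul_self_eq_one hy))
    (Real.abs_sin_lt_one_of_forall_ne hπ2) ((smul_eq_zero.1 ?_).resolve_left hcoef)
  rw [← hmain θ]
  change star (y - yθ θ) * (y - yθ θ) = 0
  rw [hfix, sub_self, star_zero, zero_mul]

theorem stmt_19 {A : Type*} [CStarAlgebra A]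
    (u : A) (hu : star u * u = 1) (hl : u * star u ≠ 1)
    (p q : A) (hp_sa : star p = p) (hp_idem : p * p = p)
    (hq_sa : star q = q) (hq_idem : q * q = q)
    (h_orth : p * q = 0) (h_sum : p + q = u * star u)
    (hp_central : ∀ x : A, (u * star u) * x * (u * star u) = x → p * x = x * p)
    (hq_central : ∀ x : A, (u * star u) * x * (u * star u) = x → q * x = x * q) :
    let l := u * star u
    let y := Complex.I • ((p - q) * u)
    let a := (1 - l) * ((1 / 2 : ℂ) • (y + star y)) * (1 - l)
    let yθ : ℝ → A := fun θ =>
      y * l + (Real.cos θ : ℂ) • (y * (1 - l)) + (Real.sin θ : ℂ) • (1 - l)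
    (∀ θ : ℝ, star (y - yθ θ) * (y - yθ θ) =
      ((2 * (1 - Real.cos θ) : ℝ) : ℂ) • ((1 - l) - (Real.sin θ : ℂ) • a)) ∧
    (∀ θ : ℝ, (∀ k : ℤ, θ ≠ 2 * Real.pi * k) →
      (∀ k : ℤ, θ ≠ (Real.pi / 2) * (1 + 2 * k)) → yθ θ ≠ y) :=
  stmt_19_general u hu hl p q hp_sa hp_idem hq_sa hq_idem h_orth h_sum
end
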